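/- For n ≥ 1, the number I_n of impractical set partitions of an n-element set satisfies I_n = B_{n,1} + Σ_{k=1}^{⌊(n−2)/2⌋} C(n,k) · P_k · B_{n−k, k+1}. -/

import Mathlib

open Finset

/-- The `n`-th Bell number: the number of set partitions of an `n`-element set. -/
noncomputable def Bell (n : ℕ) : ℕ :=
  Nat.card (Finpartition (Finset.univ : Finset (Fin n)))

/-- `Brough m j` is the number of set partitions of an `m`-element set all of whose
blocks have size strictly greater than `j` (so `Brough 0 j = 1`). -/
noncomputable def Brough (m j : ℕ) : ℕ :=
  Nat.card {P : Finpartition (Finset.univ : Finset (Fin m)) // ∀ p ∈ P.parts, j < p.card}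

/-- A set partition of `Fin n` is practical if every integer from `0` to `n`
is a sum of the sizes of some subset of its blocks. -/
def IsPractical {n : ℕ} (P : Finpartition (Finset.univ : Finset (Fin n))) : Prop :=
  ∀ k ≤ n, ∃ t ⊆ P.parts, ∑ p ∈ t, p.card = k

/-- `PP n` is the number of practical set partitions of an `n`-element set. -/
noncomputable def PP (n : ℕ) : ℕ :=
  Nat.card {P : Finpartition (Finset.univ : Finset (Fin n)) // IsPractical P}

/-- The number of impractical set partitions of an `n`-element set. -/
noncomputable def Impr (n : ℕ) : ℕ := Bell n - PP n

/-!
Let `P` be an impractical partition and `k + 1` the least integer that is not a sum of block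
sizes of `P`. Every block of size at most `k` is at most one more than the total size of the
strictly smaller ones (otherwise that total plus one would be missing), so the subset sums of the
small blocks fill an interval; as `k + 1` is missing, the small blocks have total size exactly `k`,
and no block has size `k + 1`. Hence `P` is a practical partition of a `k`-set `A` together with a
partition of the complement into blocks of size at least `k + 2`; the latter is nonempty, which
forces `2k + 2 ≤ n`. Conversely, for such `k` each such pair is an impractical partition with
first gap `k + 1`.
Summing over `k` and `A` gives the formula; the term `k = 0` is `B_{n,1}`.
-/

namespace Finset

theorem exists_subset_sum_eq_of_le_one_add_sum {ι : Type*} [DecidableEq ι] (w : ι → ℕ)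
    (T : Finset ι) (hT : ∀ i ∈ T, w i ≤ 1 + ∑ j ∈ T with w j < w i, w j) :
    ∀ m ≤ ∑ i ∈ T, w i, ∃ U ⊆ T, ∑ i ∈ U, w i = m := by
  induction T using Finset.induction_on_max_value w with
  | empty => intro m hm; exact ⟨∅, empty_subset _, by simp_all⟩
  | insert a T haT hmax ih =>
    have hsmaller : (insert a T).filter (w · < w a) ⊆ T := fun j hj => by
      obtain ⟨hj, hlt⟩ := mem_filter.1 hj
      exact (mem_insert.1 hj).resolve_left (by rintro rfl; exact lt_irrefl _ hlt)
    have hfilter : ∀ i ∈ T, (insert a T).filter (w · < w i) = T.filter (w · < w i) := by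
      intro i hi
      rw [filter_insert, if_neg (not_lt.2 (hmax i hi))]
    have ha : w a ≤ 1 + ∑ j ∈ T, w j :=
      (hT a (mem_insert_self a T)).trans (by gcongr)
    have ih := ih fun i hi => hfilter i hi ▸ hT i (mem_insert_of_mem hi)
    intro m hm
    rw [sum_insert haT] at hm
    by_cases hmT : m ≤ ∑ j ∈ T, w j
    · obtain ⟨U, hU, rfl⟩ := ih m hmT
      exact ⟨U, hU.trans (subset_insert a T), rfl⟩
    · obtain ⟨U, hU, hUm⟩ := ih (m - w a) (by omega)
      refine ⟨insert a U, insert_subset_insert a hU, ?_⟩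
      rw [sum_insert fun h => haT (hU h)]
      omega

theorem exists_map_univ_eq {α : Type*} {s : Finset α} {k : ℕ} (hs : #s = k) :
    ∃ f : Fin k ↪ α, univ.map f = s :=
  ⟨((finCongr hs.symm).trans s.equivFin.symm).toEmbedding.trans (.subtype _), by
    rw [← map_map, map_univ_equiv, univ_eq_attach, attach_map_val]⟩

theorem map_sup_id {α β : Type*} [DecidableEq α] [DecidableEq β] (f : α ↪ β)
    (U : Finset (Finset α)) :
    (U.sup id).map f = (U.map (mapEmbedding f).toEmbedding).sup id := by
  rw [sup_map]
  exact apply_sup_eq_sup_comp (Finset.map f) (fun _ _ => map_union _ _) (map_empty f)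

theorem supIndep_map_mapEmbedding_iff {α β : Type*} [DecidableEq α] [DecidableEq β]
    (f : α ↪ β) (U : Finset (Finset α)) :
    (U.map (mapEmbedding f).toEmbedding).SupIndep id ↔ U.SupIndep id := by
  simp [supIndep_iff_pairwiseDisjoint, Set.PairwiseDisjoint, Set.Pairwise, Function.onFun]

end Finset

namespace Finpartition

variable {α β : Type*} [DecidableEq α] [DecidableEq β] {s : Finset α} {t : Finset β}

section PartSums

variable (P : Finpartition s)

def IsPartSum (m : ℕ) : Prop := ∃ t ⊆ P.parts, ∑ p ∈ t, #p = m

def IsComplete : Prop := ∀ m ≤ #s, P.IsPartSum m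

def GapAfter (k : ℕ) : Prop := (∀ j ≤ k, P.IsPartSum j) ∧ ¬ P.IsPartSum (k + 1)

end PartSums

variable {P : Finpartition s}

theorem isPartSum_zero : P.IsPartSum 0 := ⟨∅, empty_subset _, sum_empty⟩

theorem GapAfter.eq {k l : ℕ} (hk : P.GapAfter k) (hl : P.GapAfter l) : k = l := by
  by_contra hne
  rcases Nat.lt_or_gt_of_ne hne with h | h
  · exact hk.2 (hl.1 _ h)
  · exact hl.2 (hk.1 _ h)

theorem exists_gapAfter_of_not_isComplete (hP : ¬ P.IsComplete) :
    ∃ k, k + 1 ≤ #s ∧ P.GapAfter k := by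
  classical
  obtain ⟨m, hm, hms⟩ : ∃ m ≤ #s, ¬ P.IsPartSum m := by simpa [IsComplete] using hP
  have hex : ∃ m, ¬ P.IsPartSum m := ⟨m, hms⟩
  have hpos : Nat.find hex ≠ 0 := fun h0 => Nat.find_spec hex (h0 ▸ isPartSum_zero)
  have hle := Nat.find_min' hex hms
  refine ⟨Nat.find hex - 1, by omega, fun j hj => not_not.1 (Nat.find_min hex (by omega)), ?_⟩
  rw [Nat.sub_add_cancel (Nat.one_le_iff_ne_zero.2 hpos)]
  exact Nat.find_spec hex

theorem GapAfter.sum_card_filter_le {k : ℕ} (h : P.GapAfter k) :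
    ∑ p ∈ P.parts with #p ≤ k, #p ≤ k := by
  have hsmall : ∀ q ∈ P.parts.filter (#· ≤ k),
      #q ≤ 1 + ∑ p ∈ P.parts.filter (#· ≤ k) with #p < #q, #p := by
    intro q hq
    by_contra! hgap
    set smaller := (P.parts.filter (#· ≤ k)).filter (#· < #q)
    have hqk := (mem_filter.1 hq).2
    obtain ⟨t, ht, htsum⟩ := h.1 (∑ p ∈ smaller, #p + 1) (by omega)
    have : t ⊆ smaller := fun p hp => by
      have := single_le_sum (fun p _ => Nat.zero_le #p) hp
      simp only [smaller, mem_filter]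
      exact ⟨⟨ht hp, by omega⟩, by omega⟩
    have := sum_le_sum_of_subset (f := card) this
    omega
  by_contra! hlt
  obtain ⟨U, hU, hUsum⟩ := exists_subset_sum_eq_of_le_one_add_sum card _ hsmall (k + 1) hlt
  exact h.2 ⟨U, hU.trans (filter_subset _ _), hUsum⟩

theorem gapAfter_iff {k : ℕ} :
    P.GapAfter k ↔ (∑ p ∈ P.parts with #p ≤ k, #p = k ∧
      ∀ j ≤ k, ∃ t ⊆ P.parts.filter (#· ≤ k), ∑ p ∈ t, #p = j) ∧
      ∀ p ∈ P.parts, k < #p → k + 1 < #p := by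
  have small_of_le {t : Finset (Finset α)} (ht : t ⊆ P.parts) (hk : ∑ p ∈ t, #p ≤ k) :
      t ⊆ P.parts.filter (#· ≤ k) := fun p hp =>
    mem_filter.2 ⟨ht hp, (single_le_sum (fun p _ => Nat.zero_le #p) hp).trans hk⟩
  constructor
  · intro h
    refine ⟨⟨h.sum_card_filter_le.antisymm ?_, fun j hj => ?_⟩, fun p hp hkp => ?_⟩
    · obtain ⟨t, ht, htk⟩ := h.1 k le_rfl
      calc k = ∑ p ∈ t, #p := htk.symm
        _ ≤ _ := sum_le_sum_of_subset (small_of_le ht htk.le)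
    · obtain ⟨t, ht, htj⟩ := h.1 j hj
      exact ⟨t, small_of_le ht (htj ▸ hj), htj⟩
    · have : #p ≠ k + 1 := fun hpk => h.2 ⟨{p}, singleton_subset_iff.2 hp, by simpa⟩
      omega
  · rintro ⟨⟨hsum, hsmall⟩, hbig⟩
    refine ⟨fun j hj => ?_, fun ⟨t, ht, htsum⟩ => ?_⟩
    · obtain ⟨t, ht, htj⟩ := hsmall j hj
      exact ⟨t, ht.trans (filter_subset _ _), htj⟩
    by_cases hts : t ⊆ P.parts.filter (#· ≤ k)
    · have := sum_le_sum_of_subset (f := card) hts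
      omega
    · obtain ⟨p, hpt, hp⟩ := not_subset.1 hts
      have hkp := hbig p (ht hpt) (by simpa [ht hpt] using hp)
      have := single_le_sum (fun p _ => Nat.zero_le #p) hpt
      omega

theorem GapAfter.two_mul_add_two_le {k : ℕ} (h : P.GapAfter k) (hks : k + 1 ≤ #s) :
    2 * k + 2 ≤ #s := by
  obtain ⟨⟨hsum, -⟩, hbig⟩ := gapAfter_iff.1 h
  have hsplit := sum_filter_add_sum_filter_not P.parts (#· ≤ k) card
  rw [P.sum_card_parts, hsum] at hsplit
  obtain ⟨p, hp⟩ : (P.parts.filter (¬ #· ≤ k)).Nonempty := by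
    rw [nonempty_iff_ne_empty]
    intro hempty
    rw [hempty, sum_empty] at hsplit
    omega
  have := single_le_sum (fun p _ => Nat.zero_le #p) hp
  have := hbig p (mem_filter.1 hp).1 (by simpa using (mem_filter.1 hp).2)
  omega

theorem not_isComplete_iff : ¬ P.IsComplete ↔ ∃ k, 2 * k + 2 ≤ #s ∧ P.GapAfter k := by
  constructor
  · intro hP
    obtain ⟨k, hks, hk⟩ := exists_gapAfter_of_not_isComplete hP
    exact ⟨k, hk.two_mul_add_two_le hks, hk⟩
  · rintro ⟨k, hks, hk⟩ hP
    exact hk.2 (hP (k + 1) (by omega))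

def finsetMap (f : α ↪ β) (h : s.map f = t) (P : Finpartition s) : Finpartition t where
  parts := P.parts.map (mapEmbedding f).toEmbedding
  supIndep := (supIndep_map_mapEmbedding_iff f _).2 P.supIndep
  sup_parts := by rw [← map_sup_id, P.sup_parts, h]
  bot_notMem := by simp

theorem finsetMap_bijective (f : α ↪ β) (h : s.map f = t) :
    Function.Bijective (finsetMap f h) := by
  refine ⟨fun P P' hP => Finpartition.ext <| map_injective _ (congrArg parts hP), fun Q => ?_⟩
  have hQ : Q.parts ⊆ s.powerset.map (mapEmbedding f).toEmbedding := fun q hq => by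
    obtain ⟨u, hu, rfl⟩ := subset_map_iff.1 (h ▸ Q.le hq)
    exact mem_map_of_mem _ (mem_powerset.2 hu)
  obtain ⟨U, -, hU⟩ := subset_map_iff.1 hQ
  refine ⟨⟨U, (supIndep_map_mapEmbedding_iff f U).1 (hU ▸ Q.supIndep), ?_, ?_⟩,
    Finpartition.ext hU.symm⟩
  · apply map_injective f
    rw [map_sup_id, ← hU, Q.sup_parts, h]
  · intro hU'
    exact Q.bot_notMem (hU ▸ mem_map_of_mem _ hU')

theorem isPartSum_finsetMap_iff (f : α ↪ β) (h : s.map f = t) (P : Finpartition s) (m : ℕ) :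
    (P.finsetMap f h).IsPartSum m ↔ P.IsPartSum m := by
  have hsum (u : Finset (Finset α)) :
      ∑ p ∈ u.map (mapEmbedding f).toEmbedding, #p = ∑ p ∈ u, #p := by simp
  constructor
  · rintro ⟨t', ht', rfl⟩
    obtain ⟨u, hu, rfl⟩ := subset_map_iff.1 ht'
    exact ⟨u, hu, (hsum u).symm⟩
  · rintro ⟨u, hu, rfl⟩
    exact ⟨u.map _, map_subset_map.2 hu, hsum u⟩

theorem isComplete_finsetMap_iff (f : α ↪ β) (h : s.map f = t) (P : Finpartition s) :
    (P.finsetMap f h).IsComplete ↔ P.IsComplete := by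
  simp only [IsComplete, isPartSum_finsetMap_iff, ← h, card_map]

theorem forall_lt_card_finsetMap_iff (f : α ↪ β) (h : s.map f = t) (P : Finpartition s)
    (j : ℕ) :
    (∀ p ∈ (P.finsetMap f h).parts, j < #p) ↔ ∀ p ∈ P.parts, j < #p := by
  simp [finsetMap]

def disjUnion {a b : Finset α} (Q : Finpartition a) (R : Finpartition b) (hab : Disjoint a b) :
    Finpartition (a ∪ b) where
  parts := Q.parts ∪ R.parts
  supIndep := by
    rw [supIndep_iff_pairwiseDisjoint, coe_union]
    exact Q.supIndep.pairwiseDisjoint.union R.supIndep.pairwiseDisjoint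
      fun p hp q hq _ => hab.mono (Q.le hp) (R.le hq)
  sup_parts := by rw [sup_union, Q.sup_parts, R.sup_parts]; rfl
  bot_notMem := by simp [Q.empty_notMem_parts, R.empty_notMem_parts]

theorem sup_filter_not (P : Finpartition s) (p : Finset α → Prop) [DecidablePred p] :
    (P.parts.filter (¬ p ·)).sup id = s \ (P.parts.filter p).sup id := by
  have hdisj := P.supIndep.disjoint_sup_sup (filter_subset p _) (filter_subset _ _)
    (disjoint_filter_filter_not _ _ p)
  rw [← union_sdiff_cancel_left hdisj, ← sup_eq_union, ← sup_union,
    filter_union_filter_not_eq, P.sup_parts]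

def splitEquiv (p : Finset α → Prop) [DecidablePred p] {A : Finset α} (hA : A ⊆ s) :
    {P : Finpartition s // (P.parts.filter p).sup id = A} ≃
      {Q : Finpartition A // ∀ q ∈ Q.parts, p q} ×
        {R : Finpartition (s \ A) // ∀ r ∈ R.parts, ¬ p r} where
  toFun P :=
    (⟨P.1.ofSubset (filter_subset p _) P.2, fun _ hq => (mem_filter.1 hq).2⟩,
      ⟨P.1.ofSubset (filter_subset (¬ p ·) _) (by rw [P.1.sup_filter_not p, P.2]),
        fun _ hr => (mem_filter.1 hr).2⟩)
  invFun QR := ⟨(QR.1.1.disjUnion QR.2.1 disjoint_sdiff).copy (union_sdiff_of_subset hA), by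
    change ((QR.1.1.parts ∪ QR.2.1.parts).filter p).sup id = A
    rw [filter_union, filter_true_of_mem QR.1.2, filter_false_of_mem QR.2.2, union_empty,
      QR.1.1.sup_parts]⟩
  left_inv P := Subtype.ext <| Finpartition.ext <| filter_union_filter_not_eq p P.1.parts
  right_inv QR := by
    obtain ⟨⟨Q, hQ⟩, ⟨R, hR⟩⟩ := QR
    refine Prod.ext (Subtype.ext <| Finpartition.ext ?_) (Subtype.ext <| Finpartition.ext ?_)
    · change (Q.parts ∪ R.parts).filter p = Q.parts
      rw [filter_union, filter_true_of_mem hQ, filter_false_of_mem hR, union_empty]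
    · change (Q.parts ∪ R.parts).filter (¬ p ·) = R.parts
      rw [filter_union, filter_false_of_mem (by simpa using hQ), filter_true_of_mem hR,
        empty_union]

end Finpartition

theorem isPractical_iff_isComplete {n : ℕ} (P : Finpartition (univ : Finset (Fin n))) :
    IsPractical P ↔ P.IsComplete := by
  rw [Finpartition.IsComplete, card_univ, Fintype.card_fin]
  rfl

namespace Finpartition

variable {α : Type*} [DecidableEq α] {s : Finset α}

theorem card_isComplete_eq_PP {k : ℕ} (hs : #s = k) :
    Nat.card {Q : Finpartition s // Q.IsComplete} = PP k := by
  obtain ⟨f, hf⟩ := exists_map_univ_eq hs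
  exact Nat.card_congr <| .symm <| (Equiv.ofBijective _ (finsetMap_bijective f hf)).subtypeEquiv
    fun P => (isPractical_iff_isComplete P).trans (isComplete_finsetMap_iff f hf P).symm

theorem card_forall_lt_card_eq_Brough {m : ℕ} (hs : #s = m) (j : ℕ) :
    Nat.card {R : Finpartition s // ∀ r ∈ R.parts, j < #r} = Brough m j := by
  obtain ⟨f, hf⟩ := exists_map_univ_eq hs
  exact Nat.card_congr <| .symm <| (Equiv.ofBijective _ (finsetMap_bijective f hf)).subtypeEquiv
    fun P => (forall_lt_card_finsetMap_iff f hf P j).symm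

theorem gapAfter_iff_splitEquiv {k : ℕ} {A : Finset α} (hA : #A = k) (hAs : A ⊆ s)
    (P : {P : Finpartition s // (P.parts.filter (#· ≤ k)).sup id = A}) :
    P.1.GapAfter k ↔ (splitEquiv (#· ≤ k) hAs P).1.1.IsComplete ∧
      ∀ r ∈ (splitEquiv (#· ≤ k) hAs P).2.1.parts, k + 1 < #r := by
  have hsum : ∑ p ∈ P.1.parts with #p ≤ k, #p = k :=
    ((splitEquiv (#· ≤ k) hAs P).1.1.sum_card_parts).trans hA
  rw [gapAfter_iff, IsComplete, hA]
  simp [splitEquiv, IsPartSum, hsum]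

theorem card_sup_eq_and_gapAfter {k : ℕ} {A : Finset α} (hA : #A = k) (hAs : A ⊆ s) :
    Nat.card {P : Finpartition s // (P.parts.filter (#· ≤ k)).sup id = A ∧ P.GapAfter k} =
      PP k * Brough (#s - k) (k + 1) := by
  have hsmall {Q : Finpartition A} : ∀ q ∈ Q.parts, #q ≤ k :=
    fun q hq => hA ▸ card_le_card (Q.le hq)
  have hbig {R : Finpartition (s \ A)} (hR : ∀ r ∈ R.parts, k + 1 < #r) :
      ∀ r ∈ R.parts, ¬ #r ≤ k := fun r hr => by have := hR r hr; omega
  rw [← card_isComplete_eq_PP hA,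
    ← card_forall_lt_card_eq_Brough (by rw [card_sdiff_of_subset hAs, hA]), ← Nat.card_prod]
  exact Nat.card_congr <| (Equiv.subtypeSubtypeEquivSubtypeInter _ _).symm.trans <|
    ((splitEquiv _ hAs).subtypeEquiv (gapAfter_iff_splitEquiv hA hAs)).trans <|
    Equiv.subtypeProdEquivProd.trans <|
    (Equiv.subtypeSubtypeEquivSubtype fun _ => hsmall).prodCongr
      (Equiv.subtypeSubtypeEquivSubtype hbig)

theorem card_gapAfter (k : ℕ) :
    Nat.card {P : Finpartition s // P.GapAfter k} =
      (#s).choose k * PP k * Brough (#s - k) (k + 1) := by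
  classical
  have hmaps : ∀ P ∈ (univ.filter (GapAfter · k) : Finset (Finpartition s)),
      (P.parts.filter (#· ≤ k)).sup id ∈ powersetCard k s := fun P hP => by
    have hsum := ((gapAfter_iff.1 (mem_filter.1 hP).2).1).1
    refine mem_powersetCard.2 ⟨Finset.sup_le fun p hp => P.le (mem_filter.1 hp).1, ?_⟩
    rw [← (P.ofSubset (filter_subset (#· ≤ k) _) rfl).sum_card_parts]
    exact hsum
  rw [Nat.card_eq_fintype_card, Fintype.card_subtype, card_eq_sum_card_fiberwise hmaps,
    sum_congr rfl fun A hA => ?_, sum_const, card_powersetCard, smul_eq_mul, mul_assoc]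
  obtain ⟨hAs, hA⟩ := mem_powersetCard.1 hA
  rw [← card_sup_eq_and_gapAfter hA hAs, Nat.card_eq_fintype_card, Fintype.card_subtype,
    filter_filter]
  simp only [and_comm]

theorem card_not_isComplete (hs : s.Nonempty) :
    Nat.card {P : Finpartition s // ¬ P.IsComplete} =
      ∑ k ∈ Icc 0 ((#s - 2) / 2), Nat.card {P : Finpartition s // P.GapAfter k} := by
  classical
  simp only [Nat.card_eq_fintype_card, Fintype.card_subtype]
  rw [← card_biUnion fun k _ l _ hkl => disjoint_filter.2 fun P _ hk hl => hkl (hk.eq hl)]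
  congr 1
  ext P
  simp only [mem_filter, mem_univ, true_and, mem_biUnion, mem_Icc, not_isComplete_iff]
  have := hs.card_pos
  refine exists_congr fun k => ⟨fun ⟨hks, hk⟩ => ⟨⟨k.zero_le, by omega⟩, hk⟩,
    fun ⟨hk, hgap⟩ => ⟨hgap.two_mul_add_two_le (by omega), hgap⟩⟩

end Finpartition

theorem PP_zero : PP 0 = 1 := by
  have hparts (P : Finpartition (univ : Finset (Fin 0))) : P.parts = ∅ :=
    Finpartition.parts_eq_empty_iff.2 (univ_eq_empty)
  rw [PP, Nat.card_eq_one_iff_unique]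
  refine ⟨⟨fun P Q => Subtype.ext <| Finpartition.ext <| (hparts P).trans (hparts Q).symm⟩,
    ⟨⟨⊥, fun m hm => ⟨∅, empty_subset _, by simp_all⟩⟩⟩⟩

theorem Impr_eq_card_not_isComplete (n : ℕ) :
    Impr n = Nat.card {P : Finpartition (univ : Finset (Fin n)) // ¬ P.IsComplete} := by
  classical
  simp only [Impr, Bell, PP, Nat.card_eq_fintype_card, ← Fintype.card_subtype_compl,
    isPractical_iff_isComplete]

/-- For `n ≥ 1`,
`I_n = B_{n,1} + ∑_{k=1}^{⌊(n−2)/2⌋} C(n,k) · P_k · B_{n−k, k+1}`. -/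
theorem impractical_eq (n : ℕ) (hn : 1 ≤ n) :
    Impr n = Brough n 1 +
      ∑ k ∈ Finset.Icc 1 ((n - 2) / 2), n.choose k * PP k * Brough (n - k) (k + 1) := by
  rw [Impr_eq_card_not_isComplete,
    Finpartition.card_not_isComplete (univ_nonempty_iff.2 ⟨⟨0, hn⟩⟩)]
  simp only [Finpartition.card_gapAfter, card_univ, Fintype.card_fin]
  rw [← insert_Icc_add_one_left_eq_Icc (Nat.zero_le _), sum_insert (by simp),
    Nat.choose_zero_right, PP_zero, Nat.sub_zero, one_mul, one_mul, zero_add]
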